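/- Let β : ℝ³ → ℝ be twice continuously differentiable and suppose that for all indices A, B ∈ {1,2,3} and all X ∈ ℝ³, ∂²β/∂X^A∂X^B (X) + δ_{AB} · Δβ(X) = 0, where Δβ = Σ_C ∂²β/∂(X^C)² is the Laplacian and δ_{AB} is the Kronecker delta. Then β is affine: there exist a ∈ ℝ³ and b ∈ ℝ such that β(X) = ⟨a, X⟩ + b for all X ∈ ℝ³. -/

import Mathlib

/-!
Taking the trace of `β,_{AB} + δ_{AB} Δβ = 0` gives `(n + 1) Δβ = 0` in dimension `n`, so
`Δβ = 0` and then every second partial derivative of `β` vanishes. Hence each first partial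
derivative is constant, the derivative of `β` is a constant linear map `L`, and `β = β 0 + L` by
the mean value theorem.
-/

/-- Partial derivative of a scalar field on `ℝ³` in the `i`-th coordinate
direction. -/
noncomputable def pd (i : Fin 3) (f : (Fin 3 → ℝ) → ℝ) (X : Fin 3 → ℝ) : ℝ :=
  fderiv ℝ f X (Pi.single i 1)

theorem Matrix.eq_zero_of_add_trace_smul_one_eq_zero {ι 𝕜 : Type*} [Fintype ι] [DecidableEq ι]
    [Field 𝕜] [CharZero 𝕜] {M : Matrix ι ι 𝕜} (h : M + M.trace • 1 = 0) : M = 0 := by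
  have htrace : M.trace * (Fintype.card ι + 1) = 0 := by
    simpa [Matrix.trace_add, Matrix.trace_smul, Matrix.trace_one, mul_add, mul_comm, add_comm]
      using congrArg Matrix.trace h
  have hM : M.trace = 0 := (mul_eq_zero.1 htrace).resolve_right (Nat.cast_add_one_ne_zero _)
  simpa [hM] using h

variable {ι : Type*} [Fintype ι] [DecidableEq ι]
  {F : Type*} [NormedAddCommGroup F] [NormedSpace ℝ F]

theorem ContinuousLinearMap.pi_ext_single_one {L M : (ι → ℝ) →L[ℝ] F}
    (h : ∀ i, L (Pi.single i 1) = M (Pi.single i 1)) : L = M :=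
  ContinuousLinearMap.coe_injective <| (Pi.basisFun ℝ ι).ext fun i => by simpa using h i

theorem ContinuousLinearMap.apply_eq_sum_single_one (L : (ι → ℝ) →L[ℝ] ℝ) (x : ι → ℝ) :
    L x = ∑ i, L (Pi.single i 1) * x i := by
  conv_lhs => rw [← Finset.univ_sum_single x]
  refine (map_sum L _ _).trans (Finset.sum_congr rfl fun i _ => ?_)
  rw [mul_comm, ← smul_eq_mul, ← L.map_smul, ← Pi.single_smul', smul_eq_mul, mul_one]

theorem fderiv_eq_fderiv_zero_of_second_partials_eq_zero {f : (ι → ℝ) → F} (hf : ContDiff ℝ 2 f)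
    (h : ∀ i j x, fderiv ℝ (fun y => fderiv ℝ f y (Pi.single j 1)) x (Pi.single i 1) = 0)
    (x : ι → ℝ) : fderiv ℝ f x = fderiv ℝ f 0 := by
  have hpartial : ∀ j, Differentiable ℝ (fun y => fderiv ℝ f y (Pi.single j 1)) := fun j =>
    ((hf.fderiv_right (m := 1) le_rfl).differentiable one_ne_zero).clm_apply
      (differentiable_const _)
  refine ContinuousLinearMap.pi_ext_single_one fun j => ?_
  refine is_const_of_fderiv_eq_zero (hpartial j) (fun y => ?_) x 0
  exact ContinuousLinearMap.pi_ext_single_one fun i => by simpa using h i j y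

theorem eq_add_of_fderiv_eq_const {E : Type*} [NormedAddCommGroup E] [NormedSpace ℝ E] {f : E → F}
    (hf : Differentiable ℝ f) {L : E →L[ℝ] F} (h : ∀ x, fderiv ℝ f x = L) (x : E) :
    f x = f 0 + L x := by
  have hg : Differentiable ℝ fun y => f 0 + L y := (differentiable_const _).add L.differentiable
  refine congrFun (eq_of_fderiv_eq hf hg (fun y => ?_) 0 (by simp)) x
  rw [h, fderiv_const_add, L.fderiv]

/-- Stress-free linearized isotropic growth distributions in dimension three:
if `β,_{AB} + δ_{AB} Δβ = 0` for all `A, B`, then `β` is affine. -/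
theorem stress_free_linearized_growth_is_affine
    (β : (Fin 3 → ℝ) → ℝ) (hβ : ContDiff ℝ 2 β)
    (h : ∀ (A B : Fin 3) (X : Fin 3 → ℝ),
      pd A (pd B β) X + (if A = B then (1 : ℝ) else 0) * (∑ C, pd C (pd C β) X) = 0) :
    ∃ (a : Fin 3 → ℝ) (b : ℝ), ∀ X : Fin 3 → ℝ, β X = (∑ i, a i * X i) + b := by
  have hessian_eq_zero : ∀ X, Matrix.of (fun A B => pd A (pd B β) X) = 0 := fun X =>
    Matrix.eq_zero_of_add_trace_smul_one_eq_zero <| by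
      ext A B
      simpa [Matrix.one_apply, Matrix.trace, mul_comm] using h A B X
  have hderiv_const : ∀ X, fderiv ℝ β X = fderiv ℝ β 0 :=
    fderiv_eq_fderiv_zero_of_second_partials_eq_zero hβ fun A B X =>
      congrFun₂ (hessian_eq_zero X) A B
  refine ⟨fun i => fderiv ℝ β 0 (Pi.single i 1), β 0, fun X => ?_⟩
  rw [eq_add_of_fderiv_eq_const (hβ.differentiable two_ne_zero) hderiv_const X,
    ContinuousLinearMap.apply_eq_sum_single_one, add_comm]
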